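/- arXiv:1406.5993 — 4 statements merged into one kernel-verified Lean document; each statement's English description precedes it below -/
import Mathlib

section
/- Let H and Ξ be real separable Hilbert spaces, let f : H × Ξ → ℝ be continuous in its first variable (for each fixed second argument) and l-Lipschitz in its second variable (uniformly in the first), and let ζ, ζ' : [0,∞) × H → Ξ be such that for every s ≥ 0 the maps ζ(s,·) and ζ'(s,·) are continuous from H into Ξ equipped with its weak topology. Define Υ : [0,∞) × H → Ξ by Υ(s,x) = [(f(x,ζ(s,x)) − f(x,ζ'(s,x))) / ‖ζ(s,x) − ζ'(s,x)‖²]·(ζ(s,x) − ζ'(s,x)) when ζ(s,x) ≠ ζ'(s,x), and Υ(s,x) = 0 otherwise. Then there exists a doubly indexed family of functions Υ_{m,n} : [0,∞) × H → Ξ (m, n ∈ ℕ) such that: (a) for every m, n and s ≥ 0 the map x ↦ Υ_{m,n}(s,x) is Lipschitz; (b) sup_{m,n} sup_{s ≥ 0} sup_{x ∈ H} ‖Υ_{m,n}(s,x)‖ < ∞; and (c) for every s ≥ 0 and x ∈ H, lim_{n→∞} lim_{m→∞} Υ_{m,n}(s,x) = Υ(s,x). -/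
/-!
Project `ζ` and `ζ'` onto an increasing sequence of finite-dimensional subspaces `U n` with
dense union. On `U n` the weak topology is the norm topology, so the projected maps are norm
continuous, and replacing `‖ζ - ζ'‖²` by `‖ζ - ζ'‖² + 1/(n+1)` yields continuous maps
`Υ_n : H → U n`, bounded by `l` and converging pointwise to `Υ`. Each `Υ_n` is in turn the
pointwise limit of Lipschitz maps, obtained from the Pasch–Hausdorff envelopes
`x ↦ ⨅ y, g y + m * dist x y` of its coordinates; since the coordinatewise bounds depend on `n`,
a final radial retraction onto the ball of radius `l + 1` restores a uniform bound.
-/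

open scoped Classical

open Filter Topology RealInnerProductSpace NNReal Set

section PaschHausdorff

variable {X : Type*} [PseudoMetricSpace X] {h : X → ℝ}

noncomputable def paschHausdorff (K : ℝ) (h : X → ℝ) (x : X) : ℝ :=
  ⨅ y, h y + K * dist x y

lemma bddBelow_range_add_mul_dist (hh : BddBelow (range h)) {K : ℝ} (hK : 0 ≤ K) (x : X) :
    BddBelow (range fun y => h y + K * dist x y) := by
  obtain ⟨c, hc⟩ := hh
  refine ⟨c, ?_⟩
  rintro _ ⟨y, rfl⟩
  linarith [hc ⟨y, rfl⟩, mul_nonneg hK (dist_nonneg (x := x) (y := y))]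

lemma paschHausdorff_le (hh : BddBelow (range h)) {K : ℝ} (hK : 0 ≤ K) (x : X) :
    paschHausdorff K h x ≤ h x := by
  simpa [paschHausdorff] using ciInf_le (bddBelow_range_add_mul_dist hh hK x) x

lemma lipschitzWith_paschHausdorff (hh : BddBelow (range h)) (K : ℝ≥0) :
    LipschitzWith K (paschHausdorff K h) := by
  refine LipschitzWith.of_le_add_mul K fun x x' => ?_
  have : Nonempty X := ⟨x⟩
  rw [← sub_le_iff_le_add]
  refine le_ciInf fun y => ?_
  rw [sub_le_iff_le_add]
  calc paschHausdorff K h x ≤ h y + K * dist x y :=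
        ciInf_le (bddBelow_range_add_mul_dist hh K.2 x) y
    _ ≤ h y + K * dist x' y + K * dist x x' := by
        rw [add_assoc, ← mul_add, add_comm (dist x' y)]
        gcongr
        apply dist_triangle

lemma tendsto_paschHausdorff (hh : BddBelow (range h)) {x : X} (hx : ContinuousAt h x) :
    Tendsto (fun m : ℕ => paschHausdorff m h x) atTop (𝓝 (h x)) := by
  refine tendsto_order.2 ⟨fun a ha => ?_, fun a ha =>
    Eventually.of_forall fun m => (paschHausdorff_le hh m.cast_nonneg x).trans_lt ha⟩
  obtain ⟨b, hab, hb⟩ := exists_between ha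
  obtain ⟨δ, hδ, hball⟩ := Metric.eventually_nhds_iff.1 (hx.eventually (lt_mem_nhds hb))
  obtain ⟨c, hc⟩ := hh
  filter_upwards [tendsto_natCast_atTop_atTop.eventually_ge_atTop ((b - c) / δ)] with m hm
  have : Nonempty X := ⟨x⟩
  refine hab.trans_le (le_ciInf fun y => ?_)
  rcases lt_or_ge (dist y x) δ with hy | hy
  · linarith [hball hy, mul_nonneg m.cast_nonneg (dist_nonneg (x := x) (y := y))]
  · have hfar : b - c ≤ m * dist x y :=
      calc b - c ≤ m * δ := (div_le_iff₀ hδ).1 hm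
        _ ≤ m * dist x y := by rw [dist_comm]; gcongr
    linarith [hc ⟨y, rfl⟩]

end PaschHausdorff

lemma Module.Basis.bddBelow_range_equivFunL_apply {α ι E : Type*} [Fintype ι]
    [NormedAddCommGroup E] [NormedSpace ℝ E] (b : Module.Basis ι ℝ E) {g : α → E}
    (hg : Bornology.IsBounded (range g)) (i : ι) :
    BddBelow (range fun y => b.equivFunL (g y) i) := by
  have := ((ContinuousLinearMap.proj i).comp b.equivFunL.toContinuousLinearMap).lipschitz
    |>.isBounded_image hg
  rw [← range_comp] at this
  exact this.bddBelow

section RadialRetraction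

variable {E : Type*} [NormedAddCommGroup E] [NormedSpace ℝ E] {R : ℝ}

noncomputable def radialRetraction (R : ℝ) (v : E) : E := (R / max R ‖v‖) • v

lemma norm_radialRetraction_le (hR : 0 < R) (v : E) : ‖radialRetraction R v‖ ≤ R := by
  have hM : 0 < max R ‖v‖ := hR.trans_le (le_max_left _ _)
  rw [radialRetraction, norm_smul, Real.norm_of_nonneg (by positivity), div_mul_eq_mul_div,
    div_le_iff₀ hM]
  gcongr
  exact le_max_right _ _

lemma radialRetraction_of_norm_le (hR : 0 < R) {v : E} (hv : ‖v‖ ≤ R) :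
    radialRetraction R v = v := by
  rw [radialRetraction, max_eq_left hv, div_self hR.ne', one_smul]

lemma lipschitzWith_radialRetraction (hR : 0 < R) :
    LipschitzWith 2 (radialRetraction R : E → E) := by
  refine LipschitzWith.of_dist_le_mul fun u v => ?_
  have hab : |max R ‖v‖ - max R ‖u‖| ≤ ‖u - v‖ := by
    rw [max_comm R, max_comm R, norm_sub_rev]
    exact (abs_max_sub_max_le_abs _ _ R).trans (abs_norm_sub_norm_le v u)
  rw [dist_eq_norm, dist_eq_norm, radialRetraction, radialRetraction]
  set a := max R ‖u‖
  set b := max R ‖v‖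
  have ha : 0 < a := hR.trans_le (le_max_left _ _)
  have hb : 0 < b := hR.trans_le (le_max_left _ _)
  have hRa : R / a ≤ 1 := (div_le_one ha).2 (le_max_left _ _)
  have hscalar : ‖(R / a - R / b) • v‖ ≤ ‖u - v‖ :=
    calc ‖(R / a - R / b) • v‖ = R / a * (|b - a| * (‖v‖ / b)) := by
          rw [norm_smul, Real.norm_eq_abs, show R / a - R / b = R / a * ((b - a) / b) by
            field_simp, abs_mul, abs_of_pos (by positivity), abs_div, abs_of_pos hb]
          ring
      _ ≤ 1 * (‖u - v‖ * 1) := by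
          gcongr
          exact (div_le_one hb).2 (le_max_right _ _)
      _ = ‖u - v‖ := by ring
  calc ‖(R / a) • u - (R / b) • v‖ = ‖(R / a) • (u - v) + (R / a - R / b) • v‖ := by
        rw [smul_sub, sub_smul]
        abel_nf
    _ ≤ R / a * ‖u - v‖ + ‖u - v‖ := by
        grw [norm_add_le, norm_smul, Real.norm_of_nonneg (by positivity), hscalar]
    _ ≤ 1 * ‖u - v‖ + ‖u - v‖ := by gcongr
    _ = 2 * ‖u - v‖ := by ring

end RadialRetraction

section FiniteDimensional

variable {X E : Type*} [PseudoMetricSpace X] [NormedAddCommGroup E] [NormedSpace ℝ E]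
  [FiniteDimensional ℝ E] {R : ℝ} {g : X → E}

noncomputable def lipschitzApprox (R : ℝ) (m : ℕ) (g : X → E) (x : X) : E :=
  radialRetraction R <| (Module.finBasis ℝ E).equivFunL.symm fun i =>
    paschHausdorff m (fun y => (Module.finBasis ℝ E).equivFunL (g y) i) x

lemma norm_lipschitzApprox_le (hR : 0 < R) (m : ℕ) (g : X → E) (x : X) :
    ‖lipschitzApprox R m g x‖ ≤ R :=
  norm_radialRetraction_le hR _

lemma exists_lipschitzWith_lipschitzApprox (hR : 0 < R) (hg : Bornology.IsBounded (range g))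
    (m : ℕ) : ∃ K : ℝ≥0, LipschitzWith K (lipschitzApprox R m g) := by
  set b := Module.finBasis ℝ E
  have hcoord : LipschitzWith m fun x i => paschHausdorff m (fun y => b.equivFunL (g y) i) x :=
    LipschitzWith.of_dist_le_mul fun x y => (dist_pi_le_iff (by positivity)).2 fun i =>
      (lipschitzWith_paschHausdorff (b.bddBelow_range_equivFunL_apply hg i) m).dist_le_mul x y
  exact ⟨_, (lipschitzWith_radialRetraction hR).comp (b.equivFunL.symm.lipschitz.comp hcoord)⟩

lemma tendsto_lipschitzApprox (hR : 0 < R) (hg : ∀ y, ‖g y‖ ≤ R) {x : X}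
    (hx : ContinuousAt g x) : Tendsto (fun m => lipschitzApprox R m g x) atTop (𝓝 (g x)) := by
  set b := Module.finBasis ℝ E
  have hg_bdd : Bornology.IsBounded (range g) :=
    isBounded_iff_forall_norm_le.2 ⟨R, forall_mem_range.2 hg⟩
  have hcoord : Tendsto (fun m : ℕ => fun i => paschHausdorff m (fun y => b.equivFunL (g y) i) x)
      atTop (𝓝 (b.equivFunL (g x))) :=
    tendsto_pi_nhds.2 fun i => tendsto_paschHausdorff (b.bddBelow_range_equivFunL_apply hg_bdd i)
      ((continuous_apply i).continuousAt.comp (b.equivFunL.continuous.continuousAt.comp hx))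
  have := ((lipschitzWith_radialRetraction hR).continuous.tendsto _).comp
    ((b.equivFunL.symm.continuous.tendsto _).comp hcoord)
  rwa [Function.comp_def, ContinuousLinearEquiv.symm_apply_apply,
    radialRetraction_of_norm_le hR (hg x)] at this

end FiniteDimensional

section DiffQuot

variable {E : Type*} [NormedAddCommGroup E] [NormedSpace ℝ E]

noncomputable def diffQuot (φ : E → ℝ) (ε : ℝ) (z z' : E) : E :=
  ((φ z - φ z') / (‖z - z'‖ ^ 2 + ε)) • (z - z')

lemma diffQuot_zero_eq_ite (φ : E → ℝ) (z z' : E) : diffQuot φ 0 z z' =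
    if z ≠ z' then ((φ z - φ z') / ‖z - z'‖ ^ 2) • (z - z') else 0 := by
  split_ifs with h
  · simp [diffQuot]
  · simp [not_not.1 h, diffQuot]

@[simp]
lemma diffQuot_self (φ : E → ℝ) (ε : ℝ) (z : E) : diffQuot φ ε z z = 0 := by
  simp [diffQuot]

lemma norm_diffQuot_le {φ : E → ℝ} {l : ℝ≥0} (hφ : LipschitzWith l φ) {ε : ℝ} (hε : 0 ≤ ε)
    (z z' : E) : ‖diffQuot φ ε z z'‖ ≤ l := by
  rcases eq_or_ne z z' with rfl | hzz
  · simp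
  have hD : 0 < ‖z - z'‖ ^ 2 + ε :=
    add_pos_of_pos_of_nonneg (pow_pos (norm_pos_iff.2 (sub_ne_zero.2 hzz)) 2) hε
  have hφzz : |φ z - φ z'| ≤ l * ‖z - z'‖ := by
    simpa [Real.dist_eq, dist_eq_norm] using hφ.dist_le_mul z z'
  rw [diffQuot, norm_smul, Real.norm_eq_abs, abs_div, abs_of_pos hD, div_mul_eq_mul_div,
    div_le_iff₀ hD]
  calc |φ z - φ z'| * ‖z - z'‖ ≤ l * ‖z - z'‖ * ‖z - z'‖ := by gcongr
    _ ≤ l * (‖z - z'‖ ^ 2 + ε) := by nlinarith [l.2]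

lemma tendsto_diffQuot {ι : Type*} {L : Filter ι} {φ : E → ℝ} {z z' : E} (hzz : z ≠ z')
    (hφz : ContinuousAt φ z) (hφz' : ContinuousAt φ z') {u u' : ι → E} {ε : ι → ℝ}
    (hu : Tendsto u L (𝓝 z)) (hu' : Tendsto u' L (𝓝 z')) (hε : Tendsto ε L (𝓝 0)) :
    Tendsto (fun i => diffQuot φ (ε i) (u i) (u' i)) L (𝓝 (diffQuot φ 0 z z')) := by
  have hden : ‖z - z'‖ ^ 2 + 0 ≠ 0 := by simpa using sub_ne_zero.2 hzz
  exact (((hφz.tendsto.comp hu).sub (hφz'.tendsto.comp hu')).div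
    (((hu.sub hu').norm.pow 2).add hε) hden).smul (hu.sub hu')

lemma continuous_diffQuot {X : Type*} [TopologicalSpace X] {φ : X → E → ℝ}
    (hφ : Continuous (Function.uncurry φ)) {ε : ℝ} (hε : 0 < ε) {a b : X → E}
    (ha : Continuous a) (hb : Continuous b) :
    Continuous fun x => diffQuot (φ x) ε (a x) (b x) :=
  (((hφ.comp (continuous_id.prodMk ha)).sub (hφ.comp (continuous_id.prodMk hb))).div
    (((ha.sub hb).norm.pow 2).add continuous_const)
      fun _ => (add_pos_of_nonneg_of_pos (sq_nonneg _) hε).ne').smul (ha.sub hb)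

lemma Submodule.coe_diffQuot (K : Submodule ℝ E) (φ : E → ℝ) (ε : ℝ) (z z' : K) :
    ((diffQuot (fun w : K => φ w) ε z z' : K) : E) = diffQuot φ ε z z' := by
  simp [diffQuot]

end DiffQuot

lemma Submodule.exists_monotone_finiteDimensional_dense (𝕜 E : Type*) [NormedField 𝕜]
    [NormedAddCommGroup E] [NormedSpace 𝕜 E] [TopologicalSpace.SeparableSpace E] :
    ∃ U : ℕ → Submodule 𝕜 E, (∀ n, FiniteDimensional 𝕜 (U n)) ∧ Monotone U ∧
      ⊤ ≤ (⨆ n, U n).topologicalClosure := by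
  obtain ⟨u, hu⟩ := TopologicalSpace.exists_dense_seq E
  refine ⟨fun n => Submodule.span 𝕜 (u '' Iio n),
    fun n => FiniteDimensional.span_of_finite 𝕜 ((finite_Iio n).image u),
    fun m n hmn => Submodule.span_mono (image_mono (Iio_subset_Iio hmn)), ?_⟩
  rw [top_le_iff, ← Submodule.dense_iff_topologicalClosure_eq_top]
  refine hu.mono ?_
  rintro _ ⟨k, rfl⟩
  exact Submodule.mem_iSup_of_mem (k + 1) (Submodule.subset_span ⟨k, Nat.lt_succ_self k, rfl⟩)

lemma tendsto_diffQuot_starProjection {E : Type*} [NormedAddCommGroup E]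
    [InnerProductSpace ℝ E] {U : ℕ → Submodule ℝ E} [∀ n, (U n).HasOrthogonalProjection]
    (hU_mono : Monotone U) (hU_dense : ⊤ ≤ (⨆ n, U n).topologicalClosure) {φ : E → ℝ}
    (hφ : Continuous φ) (z z' : E) :
    Tendsto (fun n : ℕ => diffQuot φ (1 / (n + 1)) ((U n).starProjection z)
      ((U n).starProjection z')) atTop (𝓝 (diffQuot φ 0 z z')) := by
  rcases eq_or_ne z z' with rfl | hzz
  · simp
  exact tendsto_diffQuot hzz hφ.continuousAt hφ.continuousAt
    (Submodule.starProjection_tendsto_self U hU_mono z hU_dense)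
    (Submodule.starProjection_tendsto_self U hU_mono z' hU_dense)
    tendsto_one_div_add_atTop_nhds_zero_nat

lemma Submodule.continuous_orthogonalProjectionOnto_comp {X E : Type*} [TopologicalSpace X]
    [NormedAddCommGroup E] [InnerProductSpace ℝ E] (K : Submodule ℝ E) [FiniteDimensional ℝ K]
    {g : X → E} (hg : ∀ e, Continuous fun x => ⟪g x, e⟫) :
    Continuous fun x => K.orthogonalProjectionOnto (g x) := by
  simp only [(stdOrthonormalBasis ℝ K).orthogonalProjectionOnto_apply_eq_sum, real_inner_comm]
  exact continuous_finsetSum _ fun i _ => (hg _).smul continuous_const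

theorem stmt_0_general
    {H Ξ : Type*}
    [NormedAddCommGroup H]
    [NormedAddCommGroup Ξ] [InnerProductSpace ℝ Ξ]
    [TopologicalSpace.SeparableSpace Ξ]
    (f : H → Ξ → ℝ) (l : ℝ) (hl : 0 ≤ l)
    (hf_cont : ∀ z : Ξ, Continuous fun x => f x z)
    (hf_lip : ∀ x : H, ∀ z z' : Ξ, |f x z - f x z'| ≤ l * ‖z - z'‖)
    (ζ ζ' : ℝ → H → Ξ)
    (hζ : ∀ s : ℝ, 0 ≤ s → ∀ e : Ξ, Continuous fun x => ⟪ζ s x, e⟫)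
    (hζ' : ∀ s : ℝ, 0 ≤ s → ∀ e : Ξ, Continuous fun x => ⟪ζ' s x, e⟫)
    (Υ : ℝ → H → Ξ)
    (hΥ : ∀ s x, Υ s x =
      if ζ s x ≠ ζ' s x then
        ((f x (ζ s x) - f x (ζ' s x)) / ‖ζ s x - ζ' s x‖ ^ 2) • (ζ s x - ζ' s x)
      else 0) :
    ∃ Υmn : ℕ → ℕ → ℝ → H → Ξ,
      (∀ m n : ℕ, ∀ s : ℝ, 0 ≤ s → ∃ K : ℝ≥0, LipschitzWith K (Υmn m n s)) ∧
      (∃ B : ℝ, ∀ m n : ℕ, ∀ s : ℝ, 0 ≤ s → ∀ x : H, ‖Υmn m n s x‖ ≤ B) ∧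
      (∀ s : ℝ, 0 ≤ s → ∀ x : H, ∃ g : ℕ → Ξ,
        (∀ n : ℕ, Tendsto (fun m => Υmn m n s x) atTop (𝓝 (g n))) ∧
        Tendsto g atTop (𝓝 (Υ s x))) := by
  obtain ⟨U, hU, hU_mono, hU_dense⟩ := Submodule.exists_monotone_finiteDimensional_dense ℝ Ξ
  have hf_lip' (x : H) : LipschitzWith ⟨l, hl⟩ (f x) :=
    LipschitzWith.of_dist_le_mul fun z z' => by rw [Real.dist_eq, dist_eq_norm]; exact hf_lip x z z'
  have hf_joint : Continuous (Function.uncurry f) :=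
    continuous_prod_of_continuous_lipschitzWith' _ _ hf_lip' hf_cont
  let Υn (n : ℕ) (s : ℝ) (x : H) : U n :=
    diffQuot (fun w : U n => f x w) (1 / (n + 1))
      ((U n).orthogonalProjectionOnto (ζ s x)) ((U n).orthogonalProjectionOnto (ζ' s x))
  have hΥn_coe (n s x) : (Υn n s x : Ξ) = diffQuot (f x) (1 / (n + 1))
      ((U n).starProjection (ζ s x)) ((U n).starProjection (ζ' s x)) :=
    Submodule.coe_diffQuot _ _ _ _ _
  have hΥn_norm (n s x) : ‖Υn n s x‖ ≤ l + 1 := by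
    rw [← Submodule.norm_coe, hΥn_coe]
    exact (norm_diffQuot_le (hf_lip' x) (by positivity) _ _).trans
      (le_add_of_nonneg_right zero_le_one)
  have hΥn_cont (n : ℕ) {s : ℝ} (hs : 0 ≤ s) : Continuous (Υn n s) :=
    continuous_diffQuot (φ := fun x (w : U n) => f x w)
      (hf_joint.comp (continuous_fst.prodMk (continuous_subtype_val.comp continuous_snd)))
      Nat.one_div_pos_of_nat ((U n).continuous_orthogonalProjectionOnto_comp (hζ s hs))
      ((U n).continuous_orthogonalProjectionOnto_comp (hζ' s hs))
  have hR : 0 < l + 1 := by linarith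
  refine ⟨fun m n s x => ((lipschitzApprox (l + 1) m (Υn n s) x : U n) : Ξ), fun m n s _ => ?_,
    ⟨l + 1, fun m n s _ x => ((U n).norm_coe _).trans_le (norm_lipschitzApprox_le hR _ _ _)⟩,
    fun s hs x => ⟨fun n => Υn n s x, fun n => ?_, ?_⟩⟩
  · obtain ⟨K, hK⟩ := exists_lipschitzWith_lipschitzApprox hR
      (isBounded_iff_forall_norm_le.2 ⟨l + 1, forall_mem_range.2 (hΥn_norm n s)⟩) m
    exact ⟨_, (LipschitzWith.subtype_val _).comp hK⟩
  · exact continuous_subtype_val.continuousAt.tendsto.comp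
      (tendsto_lipschitzApprox hR (hΥn_norm n s) (hΥn_cont n hs).continuousAt)
  · rw [hΥ, ← diffQuot_zero_eq_ite]
    simp only [hΥn_coe]
    exact tendsto_diffQuot_starProjection hU_mono hU_dense (hf_lip' x).continuous _ _

/-- Lemma on approximation of the Girsanov-kernel function `Υ` by a uniformly bounded,
doubly indexed family of Lipschitz functions. -/
theorem stmt_0
    {H Ξ : Type*}
    [NormedAddCommGroup H] [InnerProductSpace ℝ H] [CompleteSpace H]
    [TopologicalSpace.SeparableSpace H]
    [NormedAddCommGroup Ξ] [InnerProductSpace ℝ Ξ] [CompleteSpace Ξ]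
    [TopologicalSpace.SeparableSpace Ξ]
    (f : H → Ξ → ℝ) (l : ℝ) (hl : 0 ≤ l)
    (hf_cont : ∀ z : Ξ, Continuous fun x => f x z)
    (hf_lip : ∀ x : H, ∀ z z' : Ξ, |f x z - f x z'| ≤ l * ‖z - z'‖)
    (ζ ζ' : ℝ → H → Ξ)
    (hζ : ∀ s : ℝ, 0 ≤ s → ∀ e : Ξ, Continuous fun x => ⟪ζ s x, e⟫)
    (hζ' : ∀ s : ℝ, 0 ≤ s → ∀ e : Ξ, Continuous fun x => ⟪ζ' s x, e⟫)
    (Υ : ℝ → H → Ξ)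
    (hΥ : ∀ s x, Υ s x =
      if ζ s x ≠ ζ' s x then
        ((f x (ζ s x) - f x (ζ' s x)) / ‖ζ s x - ζ' s x‖ ^ 2) • (ζ s x - ζ' s x)
      else 0) :
    ∃ Υmn : ℕ → ℕ → ℝ → H → Ξ,
      (∀ m n : ℕ, ∀ s : ℝ, 0 ≤ s → ∃ K : ℝ≥0, LipschitzWith K (Υmn m n s)) ∧
      (∃ B : ℝ, ∀ m n : ℕ, ∀ s : ℝ, 0 ≤ s → ∀ x : H, ‖Υmn m n s x‖ ≤ B) ∧
      (∀ s : ℝ, 0 ≤ s → ∀ x : H, ∃ g : ℕ → Ξ,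
        (∀ n : ℕ, Tendsto (fun m => Υmn m n s x) atTop (𝓝 (g n))) ∧
        Tendsto g atTop (𝓝 (Υ s x))) :=
  stmt_0_general f l hl hf_cont hf_lip ζ ζ' hζ hζ' Υ hΥ
end

section
/- Let H and Ξ be real separable Hilbert spaces, let f : H × Ξ → ℝ be continuous in its first variable (for each fixed second argument) and l-Lipschitz in its second variable (uniformly in the first), and let ζ¹, ζ² : H → Ξ be continuous from H into Ξ equipped with its weak topology. Define β : H → Ξ by β(x) = [(f(x,ζ¹(x)) − f(x,ζ²(x))) / ‖ζ¹(x) − ζ²(x)‖²]·(ζ¹(x) − ζ²(x)) when ζ¹(x) ≠ ζ²(x), and β(x) = 0 otherwise. Then β is Borel measurable (from H with its norm-Borel σ-algebra to Ξ with its norm-Borel σ-algebra) and satisfies ‖β(x)‖ ≤ l for every x ∈ H. -/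
open scoped Classical Topology
open RealInnerProductSpace

/-- In a separable real inner product space, the norm is a countable sup of
normalized inner products with a dense sequence. -/
lemma norm_eq_iSup_inner_denseSeq {Ξ : Type*}
    [NormedAddCommGroup Ξ] [InnerProductSpace ℝ Ξ]
    [TopologicalSpace.SeparableSpace Ξ] (z : Ξ) :
    ‖z‖ = ⨆ n : ℕ, ⟪z, TopologicalSpace.denseSeq Ξ n⟫ / ‖TopologicalSpace.denseSeq Ξ n‖ := by
  set u := TopologicalSpace.denseSeq Ξ
  have hu : DenseRange u := TopologicalSpace.denseRange_denseSeq Ξ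
  have hb : ∀ n, ⟪z, u n⟫ / ‖u n‖ ≤ ‖z‖ := by
    intro n
    rcases eq_or_ne (u n) 0 with h | h
    · simp [h, norm_nonneg]
    · rw [div_le_iff₀ (norm_pos_iff.mpr h)]
      exact real_inner_le_norm z (u n)
  have hbdd : BddAbove (Set.range fun n => ⟪z, u n⟫ / ‖u n‖) := by
    refine ⟨‖z‖, ?_⟩
    rintro _ ⟨n, rfl⟩
    exact hb n
  refine le_antisymm ?_ (ciSup_le hb)
  rcases eq_or_ne z 0 with rfl | hz
  · have : ∀ n : ℕ, ⟪(0 : Ξ), u n⟫ / ‖u n‖ = 0 := by intro n; simp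
    simp [this]
  · -- pick a sequence in the range of `u` tending to `z`
    have hz' : z ∈ closure (Set.range u) := hu z
    obtain ⟨v, hv_mem, hv⟩ := mem_closure_iff_seq_limit.mp hz'
    have hzn : ‖z‖ ≠ 0 := norm_ne_zero_iff.mpr hz
    have hlim : Filter.Tendsto (fun k => ⟪z, v k⟫ / ‖v k‖) Filter.atTop (𝓝 ‖z‖) := by
      have h1 : Filter.Tendsto (fun k => ⟪z, v k⟫) Filter.atTop (𝓝 ⟪z, z⟫) :=
        Filter.Tendsto.inner tendsto_const_nhds hv
      have h2 : Filter.Tendsto (fun k => ‖v k‖) Filter.atTop (𝓝 ‖z‖) := hv.norm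
      have := h1.div h2 hzn
      rwa [real_inner_self_eq_norm_mul_norm, mul_div_assoc, div_self hzn, mul_one] at this
    refine le_of_tendsto hlim (Filter.Eventually.of_forall fun k => ?_)
    obtain ⟨n, hn⟩ := hv_mem k
    calc ⟪z, v k⟫ / ‖v k‖ = ⟪z, u n⟫ / ‖u n‖ := by rw [← hn]
    _ ≤ ⨆ n : ℕ, ⟪z, u n⟫ / ‖u n‖ := le_ciSup hbdd n

/-- Pettis measurability: a weakly measurable map into a separable inner product space
is measurable. -/
lemma measurable_of_inner_measurable {H Ξ : Type*} [MeasurableSpace H]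
    [NormedAddCommGroup Ξ] [InnerProductSpace ℝ Ξ]
    [TopologicalSpace.SeparableSpace Ξ]
    [MeasurableSpace Ξ] [BorelSpace Ξ]
    (g : H → Ξ) (hg : ∀ e : Ξ, Measurable fun x => ⟪g x, e⟫) :
    Measurable g := by
  set u := TopologicalSpace.denseSeq Ξ with hu_def
  have hu : DenseRange u := TopologicalSpace.denseRange_denseSeq Ξ
  -- distance to any fixed point is measurable
  have hnorm : ∀ c : Ξ, Measurable fun x => ‖g x - c‖ := by
    intro c
    have : (fun x => ‖g x - c‖) =
        fun x => ⨆ n : ℕ, ⟪g x - c, u n⟫ / ‖u n‖ := by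
      funext x; exact norm_eq_iSup_inner_denseSeq (g x - c)
    rw [this]
    refine Measurable.iSup fun n => Measurable.div ?_ measurable_const
    have : (fun x => ⟪g x - c, u n⟫) = fun x => ⟪g x, u n⟫ - ⟪c, u n⟫ := by
      funext x; rw [inner_sub_left]
    rw [this]
    exact (hg (u n)).sub measurable_const
  apply measurable_of_isOpen
  intro s hs
  have hset : g ⁻¹' s = ⋃ (n : ℕ) (q : ℚ) (_ : Metric.ball (u n) q ⊆ s),
      g ⁻¹' Metric.ball (u n) q := by
    ext x
    simp only [Set.mem_iUnion, Set.mem_preimage]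
    constructor
    · intro hx
      obtain ⟨ε, hε, hball⟩ := Metric.isOpen_iff.mp hs (g x) hx
      obtain ⟨n, hn⟩ := hu.exists_dist_lt (g x) (by positivity : (0 : ℝ) < ε / 4)
      obtain ⟨q, hq1, hq2⟩ := exists_rat_btwn (by linarith : ε / 4 < ε / 2)
      refine ⟨n, q, fun y hy => hball ?_, ?_⟩
      · rw [Metric.mem_ball] at hy ⊢
        calc dist y (g x) ≤ dist y (u n) + dist (u n) (g x) := dist_triangle _ _ _
        _ < q + ε / 4 := by
            rw [dist_comm (u n) (g x)]; exact add_lt_add hy hn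
        _ < ε / 2 + ε / 4 := by linarith
        _ < ε := by linarith
      · rw [Metric.mem_ball]
        calc dist (g x) (u n) < ε / 4 := hn
        _ < q := hq1
    · rintro ⟨n, q, hsub, hx⟩
      exact hsub hx
  rw [hset]
  refine MeasurableSet.iUnion fun n => MeasurableSet.iUnion fun q =>
    MeasurableSet.iUnion fun _ => ?_
  have : g ⁻¹' Metric.ball (u n) q = (fun x => ‖g x - u n‖) ⁻¹' Set.Iio q := by
    ext x
    simp [Metric.mem_ball, dist_eq_norm]
  rw [this]
  exact hnorm (u n) measurableSet_Iio

/-- The Girsanov kernel `β` built from two weakly* continuous fields `ζ¹, ζ²` and a generator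
`f` that is continuous in `x` and `l`-Lipschitz in `z` is Borel measurable and bounded by `l`. -/
theorem stmt_1
    {H Ξ : Type*}
    [NormedAddCommGroup H] [InnerProductSpace ℝ H] [CompleteSpace H]
    [TopologicalSpace.SeparableSpace H]
    [MeasurableSpace H] [BorelSpace H]
    [NormedAddCommGroup Ξ] [InnerProductSpace ℝ Ξ] [CompleteSpace Ξ]
    [TopologicalSpace.SeparableSpace Ξ]
    [MeasurableSpace Ξ] [BorelSpace Ξ]
    (f : H → Ξ → ℝ) (l : ℝ) (hl : 0 ≤ l)
    (hf_cont : ∀ z : Ξ, Continuous fun x => f x z)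
    (hf_lip : ∀ x : H, ∀ z z' : Ξ, |f x z - f x z'| ≤ l * ‖z - z'‖)
    (ζ1 ζ2 : H → Ξ)
    (hζ1 : ∀ e : Ξ, Continuous fun x => ⟪ζ1 x, e⟫)
    (hζ2 : ∀ e : Ξ, Continuous fun x => ⟪ζ2 x, e⟫)
    (β : H → Ξ)
    (hβ : ∀ x, β x =
      if ζ1 x ≠ ζ2 x then
        ((f x (ζ1 x) - f x (ζ2 x)) / ‖ζ1 x - ζ2 x‖ ^ 2) • (ζ1 x - ζ2 x)
      else 0) :
    Measurable β ∧ ∀ x : H, ‖β x‖ ≤ l := by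
  haveI : SecondCountableTopology Ξ := UniformSpace.secondCountable_of_separable Ξ
  haveI : SecondCountableTopology H := UniformSpace.secondCountable_of_separable H
  -- measurability of ζ1 and ζ2
  have hζ1m : Measurable ζ1 :=
    measurable_of_inner_measurable ζ1 fun e => (hζ1 e).measurable
  have hζ2m : Measurable ζ2 :=
    measurable_of_inner_measurable ζ2 fun e => (hζ2 e).measurable
  have hdm : Measurable fun x => ζ1 x - ζ2 x := hζ1m.sub hζ2m
  -- joint continuity of f
  have hF : Continuous fun p : H × Ξ => f p.1 p.2 := by
    rw [Metric.continuous_iff]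
    rintro ⟨x₀, z₀⟩ ε hε
    obtain ⟨δ₁, hδ₁, h₁⟩ := Metric.continuous_iff.mp (hf_cont z₀) x₀ (ε / 2) (by linarith)
    refine ⟨min δ₁ (ε / (2 * (l + 1))), lt_min hδ₁ (by positivity), ?_⟩
    rintro ⟨x, z⟩ h
    rw [Prod.dist_eq, max_lt_iff] at h
    obtain ⟨hx, hz⟩ := h
    have hx' : dist x x₀ < δ₁ := lt_of_lt_of_le hx (min_le_left _ _)
    have hz' : dist z z₀ < ε / (2 * (l + 1)) := lt_of_lt_of_le hz (min_le_right _ _)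
    have key1 : |f x z - f x z₀| ≤ l * ‖z - z₀‖ := hf_lip x z z₀
    have key2 : dist (f x z₀) (f x₀ z₀) < ε / 2 := h₁ x hx'
    rw [Real.dist_eq] at key2 ⊢
    have hnd : ‖z - z₀‖ = dist z z₀ := (dist_eq_norm z z₀).symm
    have h3 : l * ‖z - z₀‖ ≤ ε / 2 := by
      rw [hnd]
      have : l * dist z z₀ ≤ l * (ε / (2 * (l + 1))) :=
        mul_le_mul_of_nonneg_left hz'.le hl
      refine this.trans ?_
      rw [mul_div_assoc', div_le_div_iff₀ (by positivity) (by positivity : (0:ℝ) < 2)]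
      nlinarith [hε.le]
    calc |f x z - f x₀ z₀| ≤ |f x z - f x z₀| + |f x z₀ - f x₀ z₀| := abs_sub_le _ _ _
    _ ≤ ε / 2 + |f x z₀ - f x₀ z₀| := by linarith [key1.trans h3]
    _ < ε / 2 + ε / 2 := by linarith
    _ = ε := by ring
  have hfm1 : Measurable fun x => f x (ζ1 x) :=
    hF.measurable.comp (measurable_id.prodMk hζ1m)
  have hfm2 : Measurable fun x => f x (ζ2 x) :=
    hF.measurable.comp (measurable_id.prodMk hζ2m)
  have hnum : Measurable fun x => (f x (ζ1 x) - f x (ζ2 x)) / ‖ζ1 x - ζ2 x‖ ^ 2 :=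
    (hfm1.sub hfm2).div ((hdm.norm).pow_const 2)
  have hcond : MeasurableSet {x | ζ1 x ≠ ζ2 x} := by
    have : {x | ζ1 x ≠ ζ2 x} = (fun x => ζ1 x - ζ2 x) ⁻¹' ({0}ᶜ) := by
      ext x; simp [sub_eq_zero]
    rw [this]
    exact hdm (measurableSet_singleton 0).compl
  have hβeq : β = fun x =>
      if ζ1 x ≠ ζ2 x then
        ((f x (ζ1 x) - f x (ζ2 x)) / ‖ζ1 x - ζ2 x‖ ^ 2) • (ζ1 x - ζ2 x)
      else 0 := funext hβ
  constructor
  · rw [hβeq]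
    exact Measurable.ite hcond (hnum.smul hdm) measurable_const
  · intro x
    rw [hβ x]
    split_ifs with h
    · have hd0 : ζ1 x - ζ2 x ≠ 0 := sub_ne_zero.mpr h
      have hdn : 0 < ‖ζ1 x - ζ2 x‖ := norm_pos_iff.mpr hd0
      have hlip := hf_lip x (ζ1 x) (ζ2 x)
      rw [norm_smul, Real.norm_eq_abs, abs_div, abs_of_nonneg (by positivity : (0:ℝ) ≤ ‖ζ1 x - ζ2 x‖ ^ 2)]
      rw [div_mul_eq_mul_div, div_le_iff₀ (by positivity)]
      nlinarith [abs_nonneg (f x (ζ1 x) - f x (ζ2 x))]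
    · simpa using hl
end

section
/- Let H and Ξ be real separable Hilbert spaces, let (T_t)_{t ≥ 0} be a family of bounded linear operators on H satisfying the semigroup property T_{t+u} = T_t ∘ T_u for all t, u ≥ 0, and let G : Ξ → H be a bounded linear operator. Let (e_i)_{i∈ℕ} be a Hilbert basis of H and (b_j)_{j∈ℕ} a Hilbert basis of Ξ. Assume there are constants M > 0, η > 0 and γ ∈ [0, 1/2) such that ‖T_t‖_{op} ≤ M e^{−η t} for all t ≥ 0 and ∑_i ‖T_t e_i‖² ≤ M² t^{−2γ} for all t > 0. Then for every s > 0, ∑_j ‖T_s (G b_j)‖² ≤ M⁴ ‖G‖²_{op} e^{−η s} (s/2)^{−2γ}; in particular this sum is finite. -/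
/-!
Split `T_s = T_{s/2} ∘ T_{s/2}`. The outer factor costs its operator norm squared,
`‖T_{s/2}‖² ≤ M² e^{−ηs}`. For the inner factor, the Hilbert–Schmidt sum of `T_{s/2} ∘ G` equals
that of its adjoint `G* ∘ T_{s/2}*` in the basis `(e_i)`, which is at most
`‖G‖² ∑_i ‖T_{s/2}* e_i‖² = ‖G‖² ∑_i ‖T_{s/2} e_i‖² ≤ ‖G‖² M² (s/2)^{−2γ}`.
-/

open ContinuousLinearMap

section HilbertSchmidt

variable {𝕜 E F ι κ : Type*} [RCLike 𝕜]
  [NormedAddCommGroup E] [InnerProductSpace 𝕜 E] [NormedAddCommGroup F] [InnerProductSpace 𝕜 F]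

theorem HilbertBasis.ofReal_norm_sq_eq_tsum (e : HilbertBasis ι 𝕜 E) (x : E) :
    ENNReal.ofReal (‖x‖ ^ 2) = ∑' i, ENNReal.ofReal (‖inner 𝕜 (e i) x‖ ^ 2) := by
  have h := lp.hasSum_norm (p := 2) (by norm_num) (e.repr x)
  simp only [ENNReal.toReal_ofNat, Real.rpow_two, LinearIsometryEquiv.norm_map,
    HilbertBasis.repr_apply_apply] at h
  rw [← h.tsum_eq, ENNReal.ofReal_tsum_of_nonneg (fun i => sq_nonneg _) h.summable]

theorem tsum_ofReal_norm_sq_apply_le {E F : Type*} [SeminormedAddCommGroup E]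
    [SeminormedAddCommGroup F] [NormedSpace 𝕜 E] [NormedSpace 𝕜 F] (B : E →L[𝕜] F) (x : ι → E) :
    ∑' j, ENNReal.ofReal (‖B (x j)‖ ^ 2) ≤
      ENNReal.ofReal (‖B‖ ^ 2) * ∑' j, ENNReal.ofReal (‖x j‖ ^ 2) := by
  rw [← ENNReal.tsum_mul_left]
  refine ENNReal.tsum_le_tsum fun j => ?_
  rw [← ENNReal.ofReal_mul (sq_nonneg _), ← mul_pow]
  exact ENNReal.ofReal_le_ofReal (pow_le_pow_left₀ (norm_nonneg _) (B.le_opNorm _) 2)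

variable [CompleteSpace E] [CompleteSpace F]

theorem tsum_ofReal_norm_sq_apply_eq_adjoint (b : HilbertBasis κ 𝕜 E) (e : HilbertBasis ι 𝕜 F)
    (A : E →L[𝕜] F) :
    ∑' j, ENNReal.ofReal (‖A (b j)‖ ^ 2) = ∑' i, ENNReal.ofReal (‖adjoint A (e i)‖ ^ 2) := by
  calc ∑' j, ENNReal.ofReal (‖A (b j)‖ ^ 2)
      = ∑' j, ∑' i, ENNReal.ofReal (‖inner 𝕜 (e i) (A (b j))‖ ^ 2) :=
        tsum_congr fun j => e.ofReal_norm_sq_eq_tsum _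
    _ = ∑' i, ∑' j, ENNReal.ofReal (‖inner 𝕜 (b j) (adjoint A (e i))‖ ^ 2) := by
        rw [ENNReal.tsum_comm]
        refine tsum_congr fun i => tsum_congr fun j => ?_
        rw [← adjoint_inner_left, norm_inner_symm]
    _ = ∑' i, ENNReal.ofReal (‖adjoint A (e i)‖ ^ 2) :=
        tsum_congr fun i => (b.ofReal_norm_sq_eq_tsum _).symm

theorem tsum_ofReal_norm_sq_comp_le {K : Type*} [NormedAddCommGroup K] [InnerProductSpace 𝕜 K]
    [CompleteSpace K] (b : HilbertBasis κ 𝕜 E) (e : HilbertBasis ι 𝕜 F)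
    (B : F →L[𝕜] K) (A : E →L[𝕜] F) :
    ∑' j, ENNReal.ofReal (‖B (A (b j))‖ ^ 2) ≤
      ENNReal.ofReal (‖A‖ ^ 2) * ∑' i, ENNReal.ofReal (‖B (e i)‖ ^ 2) := by
  obtain ⟨w, f, -⟩ := exists_hilbertBasis 𝕜 K
  calc ∑' j, ENNReal.ofReal (‖B (A (b j))‖ ^ 2)
      = ∑' k, ENNReal.ofReal (‖adjoint A (adjoint B (f k))‖ ^ 2) := by
        simpa [adjoint_comp] using tsum_ofReal_norm_sq_apply_eq_adjoint b f (B.comp A)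
    _ ≤ ENNReal.ofReal (‖A‖ ^ 2) * ∑' k, ENNReal.ofReal (‖adjoint B (f k)‖ ^ 2) := by
        simpa only [LinearIsometryEquiv.norm_map] using
          tsum_ofReal_norm_sq_apply_le (adjoint A) (fun k => adjoint B (f k))
    _ = ENNReal.ofReal (‖A‖ ^ 2) * ∑' i, ENNReal.ofReal (‖B (e i)‖ ^ 2) := by
        rw [← tsum_ofReal_norm_sq_apply_eq_adjoint e f B]

end HilbertSchmidt

theorem stmt_5_general
    {H Ξ : Type*}
    [NormedAddCommGroup H] [InnerProductSpace ℝ H] [CompleteSpace H]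
    [NormedAddCommGroup Ξ] [InnerProductSpace ℝ Ξ] [CompleteSpace Ξ]
    (T : ℝ → H →L[ℝ] H)
    (hsemi : ∀ t u : ℝ, 0 ≤ t → 0 ≤ u → T (t + u) = (T t).comp (T u))
    (G : Ξ →L[ℝ] H)
    (e : HilbertBasis ℕ ℝ H) (b : HilbertBasis ℕ ℝ Ξ)
    (M η γ : ℝ)
    (hTnorm : ∀ t : ℝ, 0 ≤ t → ‖T t‖ ≤ M * Real.exp (-η * t))
    (hTHS : ∀ t : ℝ, 0 < t →
      ∑' i : ℕ, ENNReal.ofReal (‖T t (e i)‖ ^ 2) ≤ ENNReal.ofReal (M ^ 2 * t ^ (-(2 * γ)))) :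
    ∀ s : ℝ, 0 < s →
      ∑' j : ℕ, ENNReal.ofReal (‖T s (G (b j))‖ ^ 2) ≤
        ENNReal.ofReal (M ^ 4 * ‖G‖ ^ 2 * Real.exp (-η * s) * (s / 2) ^ (-(2 * γ))) ∧
      ∑' j : ℕ, ENNReal.ofReal (‖T s (G (b j))‖ ^ 2) ≠ ⊤ := by
  intro s hs
  set h := s / 2
  have hh : 0 < h := by positivity
  have hs2 : h + h = s := add_halves s
  have hTs : T s = (T h).comp (T h) := by rw [← hs2, hsemi h h hh.le hh.le]
  have hTh : ‖T h‖ ^ 2 ≤ M ^ 2 * Real.exp (-η * s) := by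
    calc ‖T h‖ ^ 2 ≤ (M * Real.exp (-η * h)) ^ 2 := by gcongr; exact hTnorm h hh.le
      _ = M ^ 2 * Real.exp (-η * s) := by
        rw [mul_pow, sq (Real.exp _), ← Real.exp_add, ← hs2]; ring_nf
  have key : ∑' j : ℕ, ENNReal.ofReal (‖T s (G (b j))‖ ^ 2) ≤
      ENNReal.ofReal (M ^ 4 * ‖G‖ ^ 2 * Real.exp (-η * s) * (s / 2) ^ (-(2 * γ))) :=
    calc ∑' j : ℕ, ENNReal.ofReal (‖T s (G (b j))‖ ^ 2)
        ≤ ENNReal.ofReal (‖T h‖ ^ 2) * ∑' j : ℕ, ENNReal.ofReal (‖T h (G (b j))‖ ^ 2) := by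
          rw [hTs]; exact tsum_ofReal_norm_sq_apply_le (T h) _
      _ ≤ ENNReal.ofReal (‖T h‖ ^ 2) *
            (ENNReal.ofReal (‖G‖ ^ 2) * ENNReal.ofReal (M ^ 2 * h ^ (-(2 * γ)))) := by
          gcongr
          exact (tsum_ofReal_norm_sq_comp_le b e (T h) G).trans (by gcongr; exact hTHS h hh)
      _ ≤ ENNReal.ofReal (M ^ 4 * ‖G‖ ^ 2 * Real.exp (-η * s) * (s / 2) ^ (-(2 * γ))) := by
          rw [← ENNReal.ofReal_mul (sq_nonneg _), ← ENNReal.ofReal_mul (sq_nonneg _)]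
          refine ENNReal.ofReal_le_ofReal ?_
          have : 0 ≤ h ^ (-(2 * γ)) := Real.rpow_nonneg hh.le _
          calc ‖T h‖ ^ 2 * (‖G‖ ^ 2 * (M ^ 2 * h ^ (-(2 * γ))))
              ≤ M ^ 2 * Real.exp (-η * s) * (‖G‖ ^ 2 * (M ^ 2 * h ^ (-(2 * γ)))) := by gcongr
            _ = M ^ 4 * ‖G‖ ^ 2 * Real.exp (-η * s) * (s / 2) ^ (-(2 * γ)) := by ring
  exact ⟨key, ne_top_of_le_ne_top ENNReal.ofReal_ne_top key⟩

/-- If `(T_t)` is a semigroup of bounded operators on `H` with `‖T_t‖ ≤ M e^{−ηt}` and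
Hilbert–Schmidt bound `∑_i ‖T_t e_i‖² ≤ M² t^{−2γ}` (`γ ∈ [0, 1/2)`), and `G : Ξ → H` is
bounded, then `∑_j ‖T_s (G b_j)‖² ≤ M⁴ ‖G‖² e^{−ηs} (s/2)^{−2γ} < ∞` for every `s > 0`. -/
theorem stmt_5
    {H Ξ : Type*}
    [NormedAddCommGroup H] [InnerProductSpace ℝ H] [CompleteSpace H]
    [TopologicalSpace.SeparableSpace H]
    [NormedAddCommGroup Ξ] [InnerProductSpace ℝ Ξ] [CompleteSpace Ξ]
    [TopologicalSpace.SeparableSpace Ξ]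
    (T : ℝ → H →L[ℝ] H)
    (hsemi : ∀ t u : ℝ, 0 ≤ t → 0 ≤ u → T (t + u) = (T t).comp (T u))
    (G : Ξ →L[ℝ] H)
    (e : HilbertBasis ℕ ℝ H) (b : HilbertBasis ℕ ℝ Ξ)
    (M η γ : ℝ) (hM : 0 < M) (hη : 0 < η) (hγ0 : 0 ≤ γ) (hγ : γ < 1 / 2)
    (hTnorm : ∀ t : ℝ, 0 ≤ t → ‖T t‖ ≤ M * Real.exp (-η * t))
    (hTHS : ∀ t : ℝ, 0 < t →
      ∑' i : ℕ, ENNReal.ofReal (‖T t (e i)‖ ^ 2) ≤ ENNReal.ofReal (M ^ 2 * t ^ (-(2 * γ)))) :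
    ∀ s : ℝ, 0 < s →
      ∑' j : ℕ, ENNReal.ofReal (‖T s (G (b j))‖ ^ 2) ≤
        ENNReal.ofReal (M ^ 4 * ‖G‖ ^ 2 * Real.exp (-η * s) * (s / 2) ^ (-(2 * γ))) ∧
      ∑' j : ℕ, ENNReal.ofReal (‖T s (G (b j))‖ ^ 2) ≠ ⊤ :=
  stmt_5_general T hsemi G e b M η γ hTnorm hTHS
end

section
/- Let H be a real separable Hilbert space and let (w_T)_{T>0} be a family of functions w_T : H → ℝ. Assume there are constants C > 0, K > 0, μ ≥ 0, η̂ > 0 and T₀ > 0 such that: (i) |w_T(x)| ≤ C(1 + ‖x‖^{1+μ}) for all T > 0 and x ∈ H; (ii) |w_T(x) − w_T(y)| ≤ K(1 + ‖x‖^{1+μ} + ‖y‖^{1+μ})‖x − y‖ for all T ≥ T₀ and x, y ∈ H; (iii) |w_T(x) − w_T(y)| ≤ C(1 + ‖x‖^{2+μ} + ‖y‖^{2+μ}) e^{−η̂ T} for all T > 0 and x, y ∈ H. Then there exist a real number L and a sequence (T_i)_{i∈ℕ} with T_i → +∞ such that for every x ∈ H, w_{T_i}(x) → L as i → ∞. 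-/
open Filter Topology

/-! The values `w_T(0)` are bounded, so along some sequence `T_i → ∞` they converge to a limit
`L`; the oscillation bound forces `w_T(x) - w_T(0) → 0` for every fixed `x`, hence
`w_{T_i}(x) → L` as well. -/

theorem tendsto_zero_of_abs_le_mul_exp_neg {f : ℝ → ℝ} {A η : ℝ} (hη : 0 < η)
    (hf : ∀ᶠ T in atTop, |f T| ≤ A * Real.exp (-η * T)) : Tendsto f atTop (𝓝 0) := by
  have hexp : Tendsto (fun T => A * Real.exp (-η * T)) atTop (𝓝 0) := by
    simpa using ((Real.tendsto_exp_atBot.comp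
      (tendsto_id.const_mul_atTop_of_neg (neg_neg_of_pos hη))).const_mul A)
  exact squeeze_zero_norm' hf hexp

theorem exists_seq_tendsto_const_of_abs_le_of_tendsto_sub {X : Type*} (w : ℝ → X → ℝ)
    (x₀ : X) (M : ℝ) (hbound : ∀ T, 0 < T → |w T x₀| ≤ M)
    (hdiff : ∀ x, Tendsto (fun T => w T x - w T x₀) atTop (𝓝 0)) :
    ∃ (L : ℝ) (Ts : ℕ → ℝ), (∀ i, 0 < Ts i) ∧ Tendsto Ts atTop atTop ∧
      ∀ x, Tendsto (fun i => w (Ts i) x) atTop (𝓝 L) := by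
  have hmem : ∀ n : ℕ, w (n + 1) x₀ ∈ Set.Icc (-M) M := fun n =>
    abs_le.mp (hbound _ n.cast_add_one_pos)
  obtain ⟨L, -, φ, hφ, hL⟩ := isCompact_Icc.tendsto_subseq hmem
  have hTs : Tendsto (fun i => (φ i : ℝ) + 1) atTop atTop :=
    tendsto_atTop_add_const_right _ _ (tendsto_natCast_atTop_atTop.comp hφ.tendsto_atTop)
  refine ⟨L, fun i => φ i + 1, fun i => (φ i).cast_add_one_pos, hTs, fun x => ?_⟩
  simpa using ((hdiff x).comp hTs).add hL

theorem stmt_7_general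
    {H : Type*} [NormedAddCommGroup H]
    (w : ℝ → H → ℝ)
    (C μ ηHat : ℝ) (hηHat : 0 < ηHat)
    (hbound : ∀ T : ℝ, 0 < T → ∀ x : H, |w T x| ≤ C * (1 + ‖x‖ ^ (1 + μ)))
    (hosc : ∀ T : ℝ, 0 < T → ∀ x y : H,
      |w T x - w T y| ≤ C * (1 + ‖x‖ ^ (2 + μ) + ‖y‖ ^ (2 + μ)) * Real.exp (-ηHat * T)) :
    ∃ (L : ℝ) (Ts : ℕ → ℝ), (∀ i, 0 < Ts i) ∧ Tendsto Ts atTop atTop ∧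
      ∀ x : H, Tendsto (fun i => w (Ts i) x) atTop (𝓝 L) := by
  exact exists_seq_tendsto_const_of_abs_le_of_tendsto_sub w 0 _ (fun T hT => hbound T hT 0)
    fun x => tendsto_zero_of_abs_le_mul_exp_neg hηHat <|
      (eventually_gt_atTop 0).mono fun T hT => hosc T hT x 0

/-- Diagonal extraction: a family `(w_T)_{T>0}` that is polynomially bounded, locally
Lipschitz uniformly in `T ≥ T₀`, and has exponentially decaying oscillation, admits a sequence
of times `T_i → ∞` along which `w_{T_i}(x)` converges to a constant `L` for every `x`. -/
theorem stmt_7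
    {H : Type*} [NormedAddCommGroup H] [InnerProductSpace ℝ H] [CompleteSpace H]
    [TopologicalSpace.SeparableSpace H]
    (w : ℝ → H → ℝ)
    (C K μ ηHat T₀ : ℝ) (hC : 0 < C) (hK : 0 < K) (hμ : 0 ≤ μ) (hηHat : 0 < ηHat)
    (hT₀ : 0 < T₀)
    (hbound : ∀ T : ℝ, 0 < T → ∀ x : H, |w T x| ≤ C * (1 + ‖x‖ ^ (1 + μ)))
    (hlip : ∀ T : ℝ, T₀ ≤ T → ∀ x y : H,
      |w T x - w T y| ≤ K * (1 + ‖x‖ ^ (1 + μ) + ‖y‖ ^ (1 + μ)) * ‖x - y‖)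
    (hosc : ∀ T : ℝ, 0 < T → ∀ x y : H,
      |w T x - w T y| ≤ C * (1 + ‖x‖ ^ (2 + μ) + ‖y‖ ^ (2 + μ)) * Real.exp (-ηHat * T)) :
    ∃ (L : ℝ) (Ts : ℕ → ℝ), (∀ i, 0 < Ts i) ∧ Tendsto Ts atTop atTop ∧
      ∀ x : H, Tendsto (fun i => w (Ts i) x) atTop (𝓝 L) :=
  stmt_7_general w C μ ηHat hηHat hbound hosc
end
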